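/- arXiv:2402.02536 — 4 statements merged into one kernel-verified Lean document; each statement's English description precedes it below -/
import Mathlib

section
/- Let (X,d) be a metric space with |X| ≥ n ≥ 2, and suppose T : X → X satisfies: there exists α ∈ [0,1) such that for all n-tuples of points x₁,...,xₙ ∈ X whose underlying set has exactly k elements (where 2 ≤ k ≤ n−1), the inequality S(Tx₁,...,Txₙ) ≤ α·S(x₁,...,xₙ) holds, where S denotes the sum of all pairwise distances. Then for all k pairwise distinct points y₁,...,y_k ∈ X, S(Ty₁,...,Ty_k) ≤ α·S(y₁,...,y_k). -/
/-!
Pad a `k`-tuple `y` of distinct points to an `n`-tuple by repeating `y r` in the `n - k` extra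
slots. Its range has `k` elements, and its total pairwise distance is
`S(y) + (n - k) * ∑ a, d(y a, y r)`. Summing over `r`, each of the `n - k` padding terms
contributes `2 * S(y)`, so the hypothesis summed over `r` reads
`(k + 2(n - k)) * S(Ty) ≤ α * (k + 2(n - k)) * S(y)`, and the positive factor cancels.
-/

/-- Total pairwise distance of points `x 0, ..., x (n-1)`. -/
noncomputable def totalS {X : Type*} [MetricSpace X] {n : ℕ} (x : Fin n → X) : ℝ :=
  ∑ i : Fin n, ∑ j ∈ Finset.Ioi i, dist (x i) (x j)

open Finset

lemma Fin.range_append_const_self {α : Type*} {k : ℕ} (x : Fin k → α) (m : ℕ) (r : Fin k) :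
    Set.range (Fin.append x fun _ : Fin m => x r) = Set.range x := by
  refine (Set.range_subset_iff.2 fun i => ?_).antisymm
    (Set.range_subset_iff.2 fun a => ⟨Fin.castAdd m a, Fin.append_left _ _ a⟩)
  induction i using Fin.addCases <;> simp

lemma Fin.comp_append {α β : Type*} {k m : ℕ} (f : α → β) (x : Fin k → α) (y : Fin m → α) :
    f ∘ Fin.append x y = Fin.append (f ∘ x) (f ∘ y) := by
  funext i
  induction i using Fin.addCases <;> simp

section
variable {X : Type*} [MetricSpace X]

lemma two_mul_totalS {n : ℕ} (x : Fin n → X) :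
    2 * totalS x = ∑ i, ∑ j, dist (x i) (x j) := by
  have dist_eq_ite_add_ite : ∀ i j, dist (x i) (x j) =
      (if i < j then dist (x i) (x j) else 0) + (if j < i then dist (x j) (x i) else 0) := by
    intro i j
    rcases lt_trichotomy i j with h | rfl | h
    · simp [h, h.not_gt]
    · simp
    · simp [h, h.not_gt, dist_comm]
  have upper : ∑ i, ∑ j, (if i < j then dist (x i) (x j) else 0) = totalS x := by
    simp only [totalS, ← sum_filter, filter_lt_eq_Ioi]
  rw [Fintype.sum_congr _ _ fun i => Fintype.sum_congr _ _ fun j => dist_eq_ite_add_ite i j]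
  simp only [sum_add_distrib]
  rw [sum_comm (f := fun i j => if j < i then _ else _), upper]
  ring

lemma totalS_append_const {k : ℕ} (x : Fin k → X) (m : ℕ) (p : X) :
    totalS (Fin.append x fun _ : Fin m => p) = totalS x + m * ∑ a, dist (x a) p := by
  refine mul_left_cancel₀ (two_ne_zero (α := ℝ)) ?_
  simp only [mul_add, two_mul_totalS, Fin.sum_univ_add, Fin.append_left, Fin.append_right,
    sum_add_distrib, dist_self, sum_const_zero, sum_const, card_univ, Fintype.card_fin,
    nsmul_eq_mul, ← mul_sum, mul_zero, dist_comm p]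
  ring

lemma sum_totalS_append_self {k : ℕ} (x : Fin k → X) (m : ℕ) :
    ∑ r, totalS (Fin.append x fun _ : Fin m => x r) = (k + 2 * m) * totalS x := by
  simp only [totalS_append_const, sum_add_distrib, ← mul_sum, sum_const, card_univ,
    Fintype.card_fin, nsmul_eq_mul]
  rw [sum_comm, ← two_mul_totalS]
  ring

lemma totalS_comp_le_of_forall_append_self {k m : ℕ} (hk : 0 < k) (T : X → X) (α : ℝ)
    (x : Fin k → X)
    (h : ∀ r, totalS (T ∘ Fin.append x fun _ : Fin m => x r)
      ≤ α * totalS (Fin.append x fun _ : Fin m => x r)) :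
    totalS (T ∘ x) ≤ α * totalS x := by
  have hsum : ∑ r, totalS (Fin.append (T ∘ x) fun _ : Fin m => (T ∘ x) r)
      ≤ ∑ r, α * totalS (Fin.append x fun _ : Fin m => x r) :=
    sum_le_sum fun r _ => Fin.comp_append T x _ ▸ h r
  rw [← mul_sum, sum_totalS_append_self, sum_totalS_append_self, mul_left_comm] at hsum
  exact le_of_mul_le_mul_left hsum (by positivity)

end

theorem stmt_0_general {X : Type*} [MetricSpace X] (n k : ℕ)
    (T : X → X) (α : ℝ)
    (hk2 : 2 ≤ k) (hkn : k ≤ n - 1)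
    (hT : ∀ x : Fin n → X, (Set.range x).ncard = k → totalS (T ∘ x) ≤ α * totalS x) :
    ∀ y : Fin k → X, Function.Injective y → totalS (T ∘ y) ≤ α * totalS y := by
  intro y hy
  obtain ⟨m, rfl⟩ := Nat.exists_eq_add_of_le (hkn.trans (n.sub_le 1))
  refine totalS_comp_le_of_forall_append_self (by omega) T α y fun r => hT _ ?_
  rw [Fin.range_append_const_self, Set.ncard_range_of_injective hy, Nat.card_fin]

theorem stmt_0 {X : Type*} [MetricSpace X] (n k : ℕ) (hn : 2 ≤ n)
    (hcard : ∃ f : Fin n → X, Function.Injective f)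
    (T : X → X) (α : ℝ) (hα0 : 0 ≤ α) (hα1 : α < 1)
    (hk2 : 2 ≤ k) (hkn : k ≤ n - 1)
    (hT : ∀ x : Fin n → X, (Set.range x).ncard = k → totalS (T ∘ x) ≤ α * totalS x) :
    ∀ y : Fin k → X, Function.Injective y → totalS (T ∘ y) ≤ α * totalS y :=
  stmt_0_general n k T α hk2 hkn hT
end

section
/- Let n ≥ 2 and let (X,d) be a metric space with |X| ≥ n. If T : X → X is a mapping contracting total pairwise distance on n points, then T is continuous. -/
open Filter Topology Finset Function Metric

theorem Set.Infinite.exists_injective_fin_mem {α : Type*} {s : Set α} (hs : s.Infinite)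
    {n : ℕ} (hn : 2 ≤ n) {a b : α} (ha : a ∈ s) (hb : b ∈ s) :
    ∃ x : Fin n → α, Injective x ∧ (∀ i, x i ∈ s) ∧ a ∈ Set.range x ∧ b ∈ Set.range x := by
  classical
  have := hs.to_subtype
  obtain ⟨u, hab, hu⟩ := Infinite.exists_superset_card_eq ({⟨a, ha⟩, ⟨b, hb⟩} : Finset s) n
    (card_le_two.trans hn)
  let e := u.equivFinOfCardEq hu
  refine ⟨fun i => (e.symm i : s), Subtype.val_injective.comp
    (Subtype.val_injective.comp e.symm.injective), fun i => (e.symm i : s).2, ?_, ?_⟩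
  · exact ⟨e ⟨⟨a, ha⟩, hab (by simp)⟩, by simp⟩
  · exact ⟨e ⟨⟨b, hb⟩, hab (by simp)⟩, by simp⟩

section TotalPairwiseDistance

variable {X : Type*} [MetricSpace X] {n : ℕ}

theorem totalS_nonneg (x : Fin n → X) : 0 ≤ totalS x := by
  unfold totalS
  positivity

theorem dist_le_totalS_of_lt (x : Fin n → X) {i j : Fin n} (hij : i < j) :
    dist (x i) (x j) ≤ totalS x :=
  calc dist (x i) (x j) ≤ ∑ k ∈ Ioi i, dist (x i) (x k) :=
        single_le_sum (fun _ _ => dist_nonneg) (mem_Ioi.2 hij)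
    _ ≤ totalS x :=
        single_le_sum (f := fun i => ∑ k ∈ Ioi i, dist (x i) (x k))
          (fun _ _ => sum_nonneg fun _ _ => dist_nonneg) (mem_univ i)

theorem dist_le_totalS (x : Fin n → X) {i j : Fin n} (hij : i ≠ j) :
    dist (x i) (x j) ≤ totalS x := by
  rcases hij.lt_or_gt with h | h
  · exact dist_le_totalS_of_lt x h
  · rw [dist_comm]
    exact dist_le_totalS_of_lt x h

theorem totalS_le_sq_mul (x : Fin n → X) {D : ℝ} (hD : ∀ i j, dist (x i) (x j) ≤ D) :
    totalS x ≤ n ^ 2 * D :=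
  calc totalS x ≤ ∑ i, ∑ j, dist (x i) (x j) :=
        sum_le_sum fun _ _ => sum_le_sum_of_subset_of_nonneg (subset_univ _)
          fun _ _ _ => dist_nonneg
    _ ≤ ∑ _i : Fin n, ∑ _j : Fin n, D := by gcongr with i _ j _; exact hD i j
    _ = n ^ 2 * D := by simp only [sum_const, card_univ, Fintype.card_fin, nsmul_eq_mul]; ring

variable {T : X → X}

theorem dist_map_le_of_infinite (hn : 2 ≤ n)
    (hT : ∀ x : Fin n → X, Injective x → totalS (T ∘ x) ≤ totalS x)
    {s : Set X} (hs : s.Infinite) {D : ℝ} (hD : ∀ a ∈ s, ∀ b ∈ s, dist a b ≤ D)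
    {a b : X} (ha : a ∈ s) (hb : b ∈ s) : dist (T a) (T b) ≤ n ^ 2 * D := by
  obtain ⟨x, hx, hxs, ⟨i, rfl⟩, ⟨j, rfl⟩⟩ := hs.exists_injective_fin_mem hn ha hb
  rcases eq_or_ne i j with rfl | hij
  · have hD₀ : 0 ≤ D := dist_self (x i) ▸ hD _ ha _ ha
    rw [dist_self]
    positivity
  · calc dist (T (x i)) (T (x j)) = dist ((T ∘ x) i) ((T ∘ x) j) := rfl
      _ ≤ totalS (T ∘ x) := dist_le_totalS _ hij
      _ ≤ totalS x := hT x hx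
      _ ≤ n ^ 2 * D := totalS_le_sq_mul x fun i j => hD _ (hxs i) _ (hxs j)

theorem dist_map_le_of_accPt (hn : 2 ≤ n)
    (hT : ∀ x : Fin n → X, Injective x → totalS (T ∘ x) ≤ totalS x)
    {x₀ : X} [(𝓝[≠] x₀).NeBot] (y : X) : dist (T y) (T x₀) ≤ 2 * n ^ 2 * dist y x₀ := by
  rcases eq_or_ne y x₀ with rfl | hy
  · simp
  have hr : 0 < dist y x₀ := dist_pos.2 hy
  have hball : (closedBall x₀ (dist y x₀)).Infinite :=
    infinite_of_mem_nhds x₀ (closedBall_mem_nhds x₀ hr)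
  have hdiam : ∀ a ∈ closedBall x₀ (dist y x₀), ∀ b ∈ closedBall x₀ (dist y x₀),
      dist a b ≤ 2 * dist y x₀ := fun a ha b hb => by
    have := dist_triangle_right a b x₀
    rw [mem_closedBall] at ha hb
    linarith
  calc dist (T y) (T x₀) ≤ n ^ 2 * (2 * dist y x₀) :=
        dist_map_le_of_infinite hn hT hball hdiam (mem_closedBall.2 le_rfl)
          (mem_closedBall_self hr.le)
    _ = 2 * n ^ 2 * dist y x₀ := by ring

theorem continuous_of_totalS_comp_le (hn : 2 ≤ n)
    (hT : ∀ x : Fin n → X, Injective x → totalS (T ∘ x) ≤ totalS x) : Continuous T := by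
  refine continuous_iff_continuousAt.2 fun x₀ => ?_
  rcases (𝓝[≠] x₀).eq_or_neBot with hiso | _
  · rw [← continuousWithinAt_compl_self, ContinuousWithinAt, hiso]
    exact tendsto_bot
  · exact continuousAt_of_locally_lipschitz one_pos _ fun y _ => dist_map_le_of_accPt hn hT y

end TotalPairwiseDistance

theorem stmt_2_general {X : Type*} [MetricSpace X] (n : ℕ) (hn : 2 ≤ n)
    (T : X → X)
    (hT : ∃ α : ℝ, 0 ≤ α ∧ α < 1 ∧
      ∀ x : Fin n → X, Function.Injective x → totalS (T ∘ x) ≤ α * totalS x) :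
    Continuous T := by
  obtain ⟨α, -, hα, hcontr⟩ := hT
  exact continuous_of_totalS_comp_le hn fun x hx =>
    (hcontr x hx).trans (mul_le_of_le_one_left (totalS_nonneg x) hα.le)

theorem stmt_2 {X : Type*} [MetricSpace X] (n : ℕ) (hn : 2 ≤ n)
    (hcard : ∃ f : Fin n → X, Function.Injective f)
    (T : X → X)
    (hT : ∃ α : ℝ, 0 ≤ α ∧ α < 1 ∧
      ∀ x : Fin n → X, Function.Injective x → totalS (T ∘ x) ≤ α * totalS x) :
    Continuous T :=
  stmt_2_general n hn T hT
end

section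
/- Let n ≥ 2, let (X,d) be a metric space with |X| ≥ n, and let T : X → X be a mapping contracting total pairwise distance on n points. Then the number of periodic points of T is at most n−1; in particular, there do not exist n pairwise distinct points x₁,...,xₙ ∈ X each of which is periodic for T. -/
/-!
Finitely many periodic points have a common period `K`, so `T^[K]` fixes any `n` of them,
while applying the contraction `K` times shrinks their positive total pairwise distance by the
factor `α ^ K < 1`.
Iterating the contraction is legitimate because `T` is injective on its periodic points, so
the images of `n` distinct periodic points stay distinct.
-/

open Function

theorem Function.exists_common_period {α ι : Type*} [Fintype ι] {f : α → α} {x : ι → α}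
    (hx : ∀ i, x i ∈ periodicPts f) : ∃ K, 0 < K ∧ ∀ i, IsPeriodicPt f K (x i) := by
  refine ⟨∏ i, minimalPeriod f (x i),
    Finset.prod_pos fun i _ ↦ minimalPeriod_pos_of_mem_periodicPts (hx i), fun i ↦ ?_⟩
  exact isPeriodicPt_iff_minimalPeriod_dvd.2 (Finset.dvd_prod_of_mem _ (Finset.mem_univ i))

theorem Set.finite_and_ncard_lt_of_not_exists_injective {α : Type*} {s : Set α} {n : ℕ}
    (h : ¬∃ x : Fin n → α, Injective x ∧ ∀ i, x i ∈ s) : s.Finite ∧ s.ncard < n := by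
  have hlt : s.encard < n := by
    by_contra! hle
    obtain ⟨t, hts, ht⟩ := Set.exists_subset_encard_eq hle
    have : Finite t := Set.finite_of_encard_eq_coe ht
    have hcard : Nat.card t = n := by
      rw [Nat.card_coe_set_eq, Set.ncard_def, ht, ENat.toNat_natCast]
    let e : t ≃ Fin n := (Finite.equivFin t).trans (finCongr hcard)
    exact h ⟨fun i ↦ e.symm i, Subtype.val_injective.comp e.symm.injective,
      fun i ↦ hts (e.symm i).2⟩
  have hfin : s.Finite := Set.finite_of_encard_le_coe hlt.le
  refine ⟨hfin, ?_⟩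
  exact_mod_cast hfin.cast_ncard_eq ▸ hlt

section TotalPairwiseDistance

variable {X : Type*} [MetricSpace X] {n : ℕ}

theorem totalS_pos (hn : 1 < n) {x : Fin n → X} (hx : Injective x) : 0 < totalS x := by
  have h01 : (⟨0, by omega⟩ : Fin n) < ⟨1, hn⟩ := Fin.mk_lt_mk.2 zero_lt_one
  refine Finset.sum_pos' (fun i _ ↦ Finset.sum_nonneg fun j _ ↦ dist_nonneg)
    ⟨_, Finset.mem_univ _, Finset.sum_pos' (fun j _ ↦ dist_nonneg) ⟨_, Finset.mem_Ioi.2 h01, ?_⟩⟩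
  exact dist_pos.2 (hx.ne h01.ne)

theorem totalS_iterate_le {T : X → X} {α : ℝ} (hα : 0 ≤ α)
    (hT : ∀ x : Fin n → X, Injective x → totalS (T ∘ x) ≤ α * totalS x)
    (m : ℕ) {x : Fin n → X} (hx : Injective x) (hper : ∀ i, x i ∈ periodicPts T) :
    totalS (T^[m] ∘ x) ≤ α ^ m * totalS x := by
  induction m generalizing x with
  | zero => simp
  | succ m ih =>
    have hTx : Injective (T ∘ x) := fun a b hab ↦
      hx ((bijOn_periodicPts T).injOn (hper a) (hper b) hab)
    calc totalS (T^[m + 1] ∘ x) = totalS (T^[m] ∘ (T ∘ x)) := by rw [iterate_succ]; rfl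
      _ ≤ α ^ m * totalS (T ∘ x) :=
          ih hTx fun i ↦ (bijOn_periodicPts T).mapsTo (hper i)
      _ ≤ α ^ m * (α * totalS x) := mul_le_mul_of_nonneg_left (hT x hx) (pow_nonneg hα m)
      _ = α ^ (m + 1) * totalS x := by ring

theorem not_exists_injective_periodicPts (hn : 1 < n) {T : X → X}
    (hT : ∃ α : ℝ, 0 ≤ α ∧ α < 1 ∧
      ∀ x : Fin n → X, Injective x → totalS (T ∘ x) ≤ α * totalS x) :
    ¬∃ x : Fin n → X, Injective x ∧ ∀ i, x i ∈ periodicPts T := by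
  rintro ⟨x, hx, hper⟩
  obtain ⟨α, hα0, hα1, hcontr⟩ := hT
  obtain ⟨K, hK, hxK⟩ := exists_common_period hper
  have hfix : T^[K] ∘ x = x := funext hxK
  have hle := totalS_iterate_le hα0 hcontr K hx hper
  rw [hfix] at hle
  have := totalS_pos hn hx
  nlinarith [pow_lt_one₀ hα0 hα1 hK.ne']

end TotalPairwiseDistance

theorem stmt_4_general {X : Type*} [MetricSpace X] (n : ℕ) (hn : 2 ≤ n)
    (T : X → X)
    (hT : ∃ α : ℝ, 0 ≤ α ∧ α < 1 ∧
      ∀ x : Fin n → X, Function.Injective x → totalS (T ∘ x) ≤ α * totalS x) :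
    ({x : X | ∃ k : ℕ, 0 < k ∧ T^[k] x = x}.Finite ∧
      {x : X | ∃ k : ℕ, 0 < k ∧ T^[k] x = x}.ncard ≤ n - 1) ∧
    ¬∃ x : Fin n → X, Function.Injective x ∧
      ∀ i : Fin n, ∃ k : ℕ, 0 < k ∧ T^[k] (x i) = x i := by
  have hnone := not_exists_injective_periodicPts hn hT
  obtain ⟨hfin, hcard⟩ := Set.finite_and_ncard_lt_of_not_exists_injective hnone
  exact ⟨⟨hfin, Nat.le_sub_one_of_lt hcard⟩, hnone⟩

theorem stmt_4 {X : Type*} [MetricSpace X] (n : ℕ) (hn : 2 ≤ n)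
    (hcard : ∃ f : Fin n → X, Function.Injective f)
    (T : X → X)
    (hT : ∃ α : ℝ, 0 ≤ α ∧ α < 1 ∧
      ∀ x : Fin n → X, Function.Injective x → totalS (T ∘ x) ≤ α * totalS x) :
    ({x : X | ∃ k : ℕ, 0 < k ∧ T^[k] x = x}.Finite ∧
      {x : X | ∃ k : ℕ, 0 < k ∧ T^[k] x = x}.ncard ≤ n - 1) ∧
    ¬∃ x : Fin n → X, Function.Injective x ∧
      ∀ i : Fin n, ∃ k : ℕ, 0 < k ∧ T^[k] (x i) = x i :=
  stmt_4_general n hn T hT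
end

section
/- Let (X,d) be a complete metric space with |X| ≥ 3 and let T : X → X be a mapping contracting perimeters of triangles, i.e., there exists α ∈ [0,1) with d(Tx,Ty)+d(Ty,Tz)+d(Tx,Tz) ≤ α(d(x,y)+d(y,z)+d(x,z)) for all pairwise distinct x,y,z ∈ X. Then T has a fixed point if and only if T has no periodic point of prime period 2, and T has at most two fixed points. -/
private lemma aux_exists {X : Type*} [MetricSpace X] [CompleteSpace X]
    (x0 : X) (T : X → X) {α : ℝ} (hα0 : 0 ≤ α) (hα1 : α < 1)
    (hc : ∀ x y z : X, x ≠ y → y ≠ z → x ≠ z →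
        dist (T x) (T y) + dist (T y) (T z) + dist (T x) (T z) ≤
          α * (dist x y + dist y z + dist x z))
    (hnp : ¬∃ x : X, T (T x) = x ∧ T x ≠ x) : ∃ x : X, T x = x := by
  by_cases hfix : ∃ n : ℕ, T^[n+1] x0 = T^[n] x0
  · obtain ⟨n, hn⟩ := hfix
    refine ⟨T^[n] x0, ?_⟩
    rwa [Function.iterate_succ_apply'] at hn
  push_neg at hfix
  set x : ℕ → X := fun n => T^[n] x0 with hxdef
  have hx1 : ∀ n, x (n+1) = T (x n) := fun n => Function.iterate_succ_apply' T n x0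
  have hne1 : ∀ n, x (n+1) ≠ x n := hfix
  have hne2 : ∀ n, x (n+2) ≠ x n := by
    intro n h
    exact hnp ⟨x n, by rw [← hx1, ← hx1]; exact h, by rw [← hx1]; exact hne1 n⟩
  set p : ℕ → ℝ := fun n => dist (x n) (x (n+1)) + dist (x (n+1)) (x (n+2)) + dist (x n) (x (n+2)) with hpdef
  have hp : ∀ n, p (n+1) ≤ α * p n := by
    intro n
    have h := hc (x n) (x (n+1)) (x (n+2)) (hne1 n).symm (hne1 (n+1)).symm
      (hne2 n).symm
    · rw [← hx1 n, ← hx1 (n+1)] at h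
      simpa [hpdef, hx1 (n+2)] using h
  have hppos : ∀ n, 0 < p n := by
    intro n
    have h1 : 0 < dist (x n) (x (n+1)) := dist_pos.mpr (hne1 n).symm
    have h2 : 0 ≤ dist (x (n+1)) (x (n+2)) := dist_nonneg
    have h3 : 0 ≤ dist (x n) (x (n+2)) := dist_nonneg
    simp only [hpdef]; linarith
  have hpk : ∀ n k, p (n + k) ≤ α ^ k * p n := by
    intro n k
    induction k with
    | zero => simp
    | succ k ih =>
      calc p (n + (k+1)) = p ((n + k) + 1) := by ring_nf
        _ ≤ α * p (n + k) := hp _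
        _ ≤ α * (α ^ k * p n) := by
            exact mul_le_mul_of_nonneg_left ih hα0
        _ = α ^ (k+1) * p n := by ring
  have hd : ∀ n, dist (x n) (x (n+1)) ≤ p 0 * α ^ n := by
    intro n
    have h1 := hpk 0 n
    have h2 : 0 ≤ dist (x (n+1)) (x (n+2)) := dist_nonneg
    have h3 : 0 ≤ dist (x n) (x (n+2)) := dist_nonneg
    have : p n ≤ α ^ n * p 0 := by simpa using h1
    simp only [hpdef] at this ⊢
    linarith
  have hcauchy : CauchySeq x := cauchySeq_of_le_geometric α (p 0) hα1 hd
  obtain ⟨l, hl⟩ := cauchySeq_tendsto_of_complete hcauchy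
  -- injectivity of x
  have hinj : Function.Injective x := by
    have key : ∀ n m, n < m → x n ≠ x m := by
      intro n m hnm heq
      have hshift : ∀ j, x (n + j) = x (m + j) := by
        intro j
        have : ∀ k : ℕ, x (k + j) = T^[j] (x k) := by
          intro k
          simp [hxdef, ← Function.iterate_add_apply, Nat.add_comm]
        rw [this n, this m, heq]
      have hpm : p n = p m := by
        simp only [hpdef]
        rw [show m = m + 0 by ring, ← hshift 0, ← hshift 1, ← hshift 2]
        norm_num
      have h1 : p m ≤ α ^ (m - n) * p n := by
        have := hpk n (m - n)
        rwa [Nat.add_sub_cancel' hnm.le] at this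
      have h2 : α ^ (m - n) ≤ α := by
        have hk : 1 ≤ m - n := Nat.one_le_iff_ne_zero.mpr (Nat.sub_ne_zero_of_lt hnm)
        calc α ^ (m - n) ≤ α ^ 1 := pow_le_pow_of_le_one hα0 hα1.le hk
          _ = α := pow_one α
      have hpn := hppos n
      nlinarith [hppos m]
    intro n m h
    rcases lt_trichotomy n m with h' | h' | h'
    · exact absurd h (key n m h')
    · exact h'
    · exact absurd h.symm (key m n h')
  obtain ⟨N, hN⟩ : ∃ N, ∀ n ≥ N, x n ≠ l := by
    by_cases hex : ∃ k, x k = l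
    · obtain ⟨k, hk⟩ := hex
      refine ⟨k + 1, fun n hn h => ?_⟩
      have : n = k := hinj (h.trans hk.symm)
      omega
    · push_neg at hex
      exact ⟨0, fun n _ => hex n⟩
  have hsucc : Filter.Tendsto (fun n => x (n+1)) Filter.atTop (nhds l) :=
    hl.comp (Filter.tendsto_add_atTop_nat 1)
  have hRHS : Filter.Tendsto
      (fun n => α * (dist (x n) (x (n+1)) + dist (x (n+1)) l + dist (x n) l))
      Filter.atTop (nhds 0) := by
    have t1 : Filter.Tendsto (fun n => dist (x n) (x (n+1))) Filter.atTop (nhds 0) := by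
      have := hl.dist hsucc
      simpa using this
    have t2 : Filter.Tendsto (fun n => dist (x (n+1)) l) Filter.atTop
        (nhds (dist l l)) := hsucc.dist tendsto_const_nhds
    rw [dist_self] at t2
    have t3 : Filter.Tendsto (fun n => dist (x n) l) Filter.atTop
        (nhds (dist l l)) := hl.dist tendsto_const_nhds
    rw [dist_self] at t3
    have := ((t1.add t2).add t3).const_mul α
    simpa using this
  have hLHS : Filter.Tendsto (fun n => dist (x (n+1)) (T l)) Filter.atTop
      (nhds (dist l (T l))) := hsucc.dist tendsto_const_nhds
  have hle : dist l (T l) ≤ 0 := by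
    refine le_of_tendsto_of_tendsto hLHS hRHS ?_
    filter_upwards [Filter.eventually_atTop.mpr ⟨N, fun n hn => hn⟩] with n hn
    have h := hc (x n) (x (n+1)) l (hne1 n).symm (hN (n+1) (by omega)) (hN n hn)
    rw [← hx1 n] at h
    have n1 : 0 ≤ dist (x (n+1)) (T (x (n+1))) := dist_nonneg
    have n2 : 0 ≤ dist (T (x (n+1))) (T l) := dist_nonneg
    linarith
  have : dist l (T l) = 0 := le_antisymm hle dist_nonneg
  exact ⟨l, (dist_eq_zero.mp this).symm⟩

theorem stmt_6 {X : Type*} [MetricSpace X] [CompleteSpace X]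
    (hcard : ∃ f : Fin 3 → X, Function.Injective f)
    (T : X → X)
    (hT : ∃ α : ℝ, 0 ≤ α ∧ α < 1 ∧
      ∀ x y z : X, x ≠ y → y ≠ z → x ≠ z →
        dist (T x) (T y) + dist (T y) (T z) + dist (T x) (T z) ≤
          α * (dist x y + dist y z + dist x z)) :
    ((∃ x : X, T x = x) ↔ ¬∃ x : X, T (T x) = x ∧ T x ≠ x) ∧
    (∀ a b c : X, T a = a → T b = b → T c = c → a = b ∨ a = c ∨ b = c) := by
  obtain ⟨α, hα0, hα1, hc⟩ := hT
  constructor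
  · constructor
    · rintro ⟨x0, hx0⟩ ⟨y, hy2, hy1⟩
      have hxy : x0 ≠ y := by
        rintro rfl; exact hy1 (by rw [hx0])
      have hTy : x0 ≠ T y := by
        intro h
        apply hy1
        have h2 : T x0 = y := by rw [h]; exact hy2
        have h3 : x0 = y := hx0.symm.trans h2
        rw [← h3]; exact hx0
      have hyTy : y ≠ T y := Ne.symm hy1
      have h := hc x0 y (T y) hxy hyTy hTy
      rw [hx0, hy2] at h
      have hpos : 0 < dist x0 y := dist_pos.mpr hxy
      have e1 : dist x0 (T y) = dist (T y) x0 := dist_comm _ _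
      have e2 : dist y (T y) = dist (T y) y := dist_comm _ _
      have e3 : dist x0 y = dist y x0 := dist_comm _ _
      nlinarith [dist_nonneg (x := y) (y := T y), dist_nonneg (x := x0) (y := T y)]
    · intro hnp
      obtain ⟨f, -⟩ := hcard
      exact aux_exists (f 0) T hα0 hα1 hc hnp
  · intro a b c ha hb hc'
    by_contra h
    push_neg at h
    obtain ⟨hab, hac, hbc⟩ := h
    have hcontr := hc a b c hab hbc hac
    rw [ha, hb, hc'] at hcontr
    have h1 : 0 < dist a b := dist_pos.mpr hab
    have h2 : 0 < dist b c := dist_pos.mpr hbc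
    have h3 : 0 < dist a c := dist_pos.mpr hac
    nlinarith
end
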